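/- If Φ = V^{π,γ} in a finite MDP, then the shaped reward r̃ has zero expected future response: for all l ≥ 1, E[r̃_{t+l} | s_t = s, a_t = a] = 0 for all (s,a), where the expectation is over the trajectory following policy π. -/
import Mathlib


/-- Expected reward `l` steps in the future, conditioned on taking action `a` in
state `s` and following policy `π` thereafter. -/
def expectedFutureReward {S A : Type*} [Fintype S] [Fintype A]
    (P : S → A → S → ℝ) (π : S → A → ℝ) (r : S → A → S → ℝ) : ℕ → S → A → ℝ
  | 0, s, a => ∑ s', P s a s' * r s a s'
  | (l + 1), s, a => ∑ s', P s a s' * ∑ a', π s' a' * expectedFutureReward P π r l s' a'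

/-- If the shaping potential is the true value function `Φ = V^{π,γ}`, the shaped
reward `r̃(s,a,s') = r(s,a,s') + γV^{π,γ}(s') - V^{π,γ}(s)` has zero expected future
response: `E[r̃_{t+l} | s_t=s, a_t=a] = 0` for all `l ≥ 1` and all `(s,a)`. -/
theorem shaped_reward_zero_future_response
    {S A : Type*} [Fintype S] [Fintype A]
    (P : S → A → S → ℝ) (hPnn : ∀ s a s', 0 ≤ P s a s') (hP1 : ∀ s a, ∑ s', P s a s' = 1)
    (π : S → A → ℝ) (hπnn : ∀ s a, 0 ≤ π s a) (hπ1 : ∀ s, ∑ a, π s a = 1)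
    (r : S → A → S → ℝ) (R : ℝ) (hr : ∀ s a s', |r s a s'| ≤ R)
    (γ : ℝ) (hγ0 : 0 ≤ γ) (hγ1 : γ < 1)
    (V : S → ℝ)
    (hV : ∀ s, V s = ∑ a, π s a * ∑ s', P s a s' * (r s a s' + γ * V s'))
    (rt : S → A → S → ℝ) (hrt : ∀ s a s', rt s a s' = r s a s' + γ * V s' - V s) :
    ∀ l, 1 ≤ l → ∀ s a, expectedFutureReward P π rt l s a = 0 := by
  have h0 : ∀ (s' : S) (a' : A), expectedFutureReward P π rt 0 s' a'
      = (∑ s'', P s' a' s'' * (r s' a' s'' + γ * V s'')) - V s' := by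
    intro s' a'
    simp only [expectedFutureReward]
    have : ∀ s'', P s' a' s'' * rt s' a' s''
        = P s' a' s'' * (r s' a' s'' + γ * V s'') - P s' a' s'' * V s' := by
      intro s''; rw [hrt]; ring
    rw [Finset.sum_congr rfl (fun s'' _ => this s''), Finset.sum_sub_distrib,
      ← Finset.sum_mul, hP1, one_mul]
  have key : ∀ s' : S, ∑ a', π s' a' * expectedFutureReward P π rt 0 s' a' = 0 := by
    intro s'
    have : ∀ a' : A, π s' a' * expectedFutureReward P π rt 0 s' a'
        = π s' a' * (∑ s'', P s' a' s'' * (r s' a' s'' + γ * V s'')) - π s' a' * V s' := by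
      intro a'; rw [h0]; ring
    rw [Finset.sum_congr rfl (fun a' _ => this a'), Finset.sum_sub_distrib,
      ← Finset.sum_mul, hπ1, one_mul, ← hV, sub_self]
  intro l hl
  induction l with
  | zero => omega
  | succ n ih =>
    intro s a
    rcases Nat.eq_zero_or_pos n with hn | hn
    · subst hn
      simp only [expectedFutureReward]
      refine Finset.sum_eq_zero fun s' _ => ?_
      have h := key s'
      simp only [expectedFutureReward] at h
      rw [h, mul_zero]
    · simp only [expectedFutureReward]
      refine Finset.sum_eq_zero fun s' _ => ?_
      rw [Finset.sum_eq_zero fun a' _ => by rw [ih hn s' a', mul_zero], mul_zero]
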